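/- For every integer r ≥ 1 there exists a finite solvable group G of odd order with derived length exactly 2r and Ω(|G|) = (7^r − 1)/3, where Ω(|G|) is the number of prime factors of |G| counted with multiplicity. (Such a group is the r-fold iterated wreath product of the group H₇ ≤ S₇ of order 21, a transitive subgroup of S_{7^r}.) -/

import Mathlib

/-!
The Frobenius group `F₂₁ = C₇ ⋊ C₃` of affine maps `x ↦ 2ᵏx + b` of `ZMod 7` has derived length
`2`, and its derived subgroup contains the translation `x ↦ x + 1`, which moves `0` to two further
points. For any group `A`, two commutators with that translation turn a function `ZMod 7 → A`
supported at `0` into an element of the second derived subgroup of `A ≀ F₂₁ = (ZMod 7 → A) ⋊ F₂₁`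
with the same value at `0`; hence the derived series of `A` embeds, shifted by two, into that of
`A ≀ F₂₁`, and the wreath product has derived length exactly `d(A) + 2`. Since
`|A ≀ F₂₁| = |A|⁷ · 21`, iterating `r` times from the trivial group gives a group of odd order and
derived length `2r` whose `Ω` follows `Ω ↦ 7 Ω + 2`, i.e. equals `(7ʳ - 1)/3`.
-/

/-- `Omega n` is the number of prime factors of `n` counted with multiplicity,
usually denoted `Ω(n)`.  For a finite solvable group `G`, `Omega (Nat.card G)`
is the composition length of `G`. -/
def Omega (n : ℕ) : ℕ := n.primeFactorsList.length

/-- `DerivedLengthEq G d` says that the derived (solvable) length of `G` is exactly `d`: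
the `d`-th term of the derived series is trivial and no earlier term is trivial. -/
def DerivedLengthEq (G : Type*) [Group G] (d : ℕ) : Prop :=
  derivedSeries G d = ⊥ ∧ ∀ k < d, derivedSeries G k ≠ ⊥

open SemidirectProduct
open scoped commutatorElement

theorem derivedLengthEq_succ_iff {G : Type*} [Group G] {d : ℕ} :
    DerivedLengthEq G (d + 1) ↔ derivedSeries G (d + 1) = ⊥ ∧ derivedSeries G d ≠ ⊥ := by
  refine ⟨fun h => ⟨h.1, h.2 d d.lt_succ_self⟩, fun h => ⟨h.1, fun k hk hbot => h.2 ?_⟩⟩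
  exact le_bot_iff.mp (hbot ▸ derivedSeries_antitone G (Nat.le_of_lt_succ hk))

theorem derivedSeries_one_eq_bot (G : Type*) [CommGroup G] : derivedSeries G 1 = ⊥ := by
  rw [derivedSeries_one, commutator_eq_bot]

theorem derivedSeries_pi_eq_bot {ι A : Type*} [Group A] {k : ℕ} (h : derivedSeries A k = ⊥) :
    derivedSeries (ι → A) k = ⊥ := by
  refine (Subgroup.eq_bot_iff_forall _).mpr fun f hf => funext fun i => ?_
  have := map_derivedSeries_le_derivedSeries (Pi.evalMonoidHom (fun _ : ι => A) i) k
    (Subgroup.mem_map_of_mem _ hf)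
  rwa [h, Subgroup.mem_bot] at this

theorem map_derivedSeries_le_derivedSeries_add {K G : Type*} [Group K] [Group G] (f : K →* G)
    {j : ℕ} (hf : f.range ≤ derivedSeries G j) (k : ℕ) :
    (derivedSeries K k).map f ≤ derivedSeries G (j + k) := by
  induction k with
  | zero => rwa [derivedSeries_zero, ← MonoidHom.range_eq_map]
  | succ k ih =>
    rw [← Nat.add_assoc, derivedSeries_succ, derivedSeries_succ, Subgroup.map_commutator]
    exact Subgroup.commutator_mono ih ih

namespace SemidirectProduct

variable {N G : Type*} [Group N] [Group G] (φ : G →* MulAut N)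

instance [Finite N] [Finite G] : Finite (N ⋊[φ] G) := Finite.of_equiv _ equivProd.symm

theorem commutatorElement_inl_inr (n : N) (g : G) :
    ⁅(inl n : N ⋊[φ] G), (inr g : N ⋊[φ] G)⁆ = inl (n * φ g n⁻¹) := by
  ext <;> simp [commutatorElement_def]

theorem derivedSeries_add_le_map_inl {j : ℕ} (hG : derivedSeries G j = ⊥) (k : ℕ) :
    derivedSeries (N ⋊[φ] G) (j + k) ≤ (derivedSeries N k).map inl := by
  induction k with
  | zero =>
    rw [derivedSeries_zero, ← MonoidHom.range_eq_map, range_inl_eq_ker_rightHom]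
    intro x hx
    have := map_derivedSeries_le_derivedSeries rightHom j (Subgroup.mem_map_of_mem _ hx)
    rwa [hG, Subgroup.mem_bot] at this
  | succ k ih =>
    rw [← Nat.add_assoc, derivedSeries_succ, derivedSeries_succ, Subgroup.map_commutator]
    exact Subgroup.commutator_mono ih ih

end SemidirectProduct

abbrev WreathProduct (A X G : Type*) [Group A] [Group G] [MulAction G X] :=
  (X → A) ⋊[mulAutArrow] G

namespace WreathProduct

variable {A X G : Type*} [Group A] [Group G] [MulAction G X]

theorem commutatorElement_inl_inr (f : X → A) (g : G) :
    ⁅(inl f : WreathProduct A X G), (inr g : WreathProduct A X G)⁆ =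
      inl fun x => f x * (f (g⁻¹ • x))⁻¹ := by
  rw [SemidirectProduct.commutatorElement_inl_inr]
  rfl

theorem exists_inl_mem_derivedSeries_two {t : G} (ht : t ∈ derivedSeries G 1)
    {x₀ : X} (h₁ : t • x₀ ≠ x₀) (h₂ : t • t • x₀ ≠ x₀) (a : A) :
    ∃ f : X → A, inl f ∈ derivedSeries (WreathProduct A X G) 2 ∧ f x₀ = a := by
  classical
  set s : X → A := Pi.mulSingle x₀ a
  set g : X → A := fun x => s x * (s (t • x))⁻¹
  have hg : inl g ∈ derivedSeries (WreathProduct A X G) 1 := by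
    have := commutatorElement_inl_inr s t⁻¹
    simp only [inv_inv] at this
    rw [derivedSeries_one, ← this]
    exact Subgroup.commutator_mem_commutator (Subgroup.mem_top _) (Subgroup.mem_top _)
  have ht' : inr t⁻¹ ∈ derivedSeries (WreathProduct A X G) 1 :=
    map_derivedSeries_le_derivedSeries inr 1 (Subgroup.mem_map_of_mem _ (inv_mem ht))
  refine ⟨fun x => g x * (g (t • x))⁻¹, ?_, ?_⟩
  · have := commutatorElement_inl_inr g t⁻¹
    simp only [inv_inv] at this
    rw [derivedSeries_succ, ← this]
    exact Subgroup.commutator_mem_commutator hg ht'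
  · simp [g, s, Pi.mulSingle_apply, h₁, h₂]

theorem derivedSeries_two_add_ne_bot {t : G} (ht : t ∈ derivedSeries G 1) {x₀ : X}
    (h₁ : t • x₀ ≠ x₀) (h₂ : t • t • x₀ ≠ x₀) {k : ℕ} (hA : derivedSeries A k ≠ ⊥) :
    derivedSeries (WreathProduct A X G) (2 + k) ≠ ⊥ := by
  set K := (derivedSeries (WreathProduct A X G) 2).comap inl
  have hsurj : Function.Surjective ((Pi.evalMonoidHom (fun _ : X => A) x₀).comp K.subtype) :=
    fun a =>
      let ⟨f, hf, hfa⟩ := exists_inl_mem_derivedSeries_two ht h₁ h₂ a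
      ⟨⟨f, hf⟩, hfa⟩
  have hinj : Function.Injective ((inl : (X → A) →* WreathProduct A X G).comp K.subtype) :=
    inl_injective.comp Subtype.val_injective
  have hrange : ((inl : (X → A) →* WreathProduct A X G).comp K.subtype).range ≤
      derivedSeries (WreathProduct A X G) 2 := by
    rintro _ ⟨f, rfl⟩
    exact f.2
  intro hW
  have hK : derivedSeries K k = ⊥ := (Subgroup.map_eq_bot_iff_of_injective _ hinj).mp
    (le_bot_iff.mp (hW ▸ map_derivedSeries_le_derivedSeries_add _ hrange k))
  exact hA (by rw [← map_derivedSeries_eq hsurj, hK, Subgroup.map_bot])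

theorem derivedLengthEq_add_two (hG : derivedSeries G 2 = ⊥) {t : G}
    (ht : t ∈ derivedSeries G 1) {x₀ : X} (h₁ : t • x₀ ≠ x₀) (h₂ : t • t • x₀ ≠ x₀) {d : ℕ}
    (hA : DerivedLengthEq A d) : DerivedLengthEq (WreathProduct A X G) (d + 2) := by
  rw [derivedLengthEq_succ_iff]
  constructor
  · have := derivedSeries_add_le_map_inl (mulAutArrow : G →* MulAut (X → A)) hG d
    rwa [derivedSeries_pi_eq_bot hA.1, Subgroup.map_bot, le_bot_iff, add_comm] at this
  · cases d with
    | zero =>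
      intro hW
      have := map_derivedSeries_le_derivedSeries (inr : G →* WreathProduct A X G) 1
        (Subgroup.mem_map_of_mem _ ht)
      rw [hW, Subgroup.mem_bot, map_eq_one_iff _ inr_injective] at this
      exact h₁ (this ▸ one_smul G x₀)
    | succ d =>
      rw [show d + 1 + 1 = 2 + d by omega]
      exact derivedSeries_two_add_ne_bot ht h₁ h₂ (derivedLengthEq_succ_iff.mp hA).2

end WreathProduct

def DistribMulAction.toMulAutMultiplicative (M V : Type*) [Group M] [AddGroup V]
    [DistribMulAction M V] : M →* MulAut (Multiplicative V) where
  toFun m := AddEquiv.toMultiplicative (DistribMulAction.toAddEquiv V m)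
  map_one' := by ext; simp
  map_mul' m n := by ext; simp [mul_smul]

namespace Frobenius21

def two : (ZMod 7)ˣ := ⟨2, 4, by decide, by decide⟩

def twoPow : Multiplicative (ZMod 3) →* (ZMod 7)ˣ where
  toFun k := two ^ k.toAdd.val
  map_one' := by decide
  map_mul' := by decide

end Frobenius21

abbrev Frobenius21 :=
  Multiplicative (ZMod 7) ⋊[(DistribMulAction.toMulAutMultiplicative (ZMod 7)ˣ (ZMod 7)).comp
    Frobenius21.twoPow] Multiplicative (ZMod 3)

namespace Frobenius21

instance : SMul Frobenius21 (ZMod 7) := ⟨fun h x => twoPow h.right • x + h.left.toAdd⟩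

theorem smul_def (h : Frobenius21) (x : ZMod 7) : h • x = twoPow h.right • x + h.left.toAdd :=
  rfl

instance : MulAction Frobenius21 (ZMod 7) where
  one_smul x := by simp [smul_def]
  mul_smul g h x := by
    rw [smul_def, smul_def, smul_def, mul_right, map_mul, mul_smul, smul_add, mul_left, toAdd_mul,
      add_assoc, add_comm (Multiplicative.toAdd g.left)]
    rfl

def translation : Frobenius21 := inl (Multiplicative.ofAdd 1)

theorem translation_smul (x : ZMod 7) : translation • x = x + 1 := by
  simp [translation, smul_def]

theorem translation_mem_derivedSeries_one : translation ∈ derivedSeries Frobenius21 1 := by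
  have : translation =
      ⁅(inl (Multiplicative.ofAdd (-1)) : Frobenius21), inr (Multiplicative.ofAdd 1)⁆ := by
    rw [commutatorElement_inl_inr]
    decide
  rw [this, derivedSeries_one]
  exact Subgroup.commutator_mem_commutator (Subgroup.mem_top _) (Subgroup.mem_top _)

theorem derivedSeries_two : derivedSeries Frobenius21 2 = ⊥ := by
  have := derivedSeries_add_le_map_inl
    ((DistribMulAction.toMulAutMultiplicative (ZMod 7)ˣ (ZMod 7)).comp twoPow)
    (derivedSeries_one_eq_bot _) 1
  rwa [derivedSeries_one_eq_bot, Subgroup.map_bot, le_bot_iff] at this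

end Frobenius21

theorem omega_pow_mul {m n : ℕ} (hm : m ≠ 0) (hn : n ≠ 0) (k : ℕ) :
    Omega (m ^ k * n) = k * Omega m + Omega n := by
  simp only [Omega, ← ArithmeticFunction.cardFactors_apply,
    ArithmeticFunction.cardFactors_mul (pow_ne_zero k hm) hn, ArithmeticFunction.cardFactors_pow]

theorem exists_odd_derivedLengthEq_two_mul (r : ℕ) :
    ∃ (G : Type) (_ : Group G) (_ : Finite G), Odd (Nat.card G) ∧
      DerivedLengthEq G (2 * r) ∧ 3 * Omega (Nat.card G) + 1 = 7 ^ r := by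
  induction r with
  | zero =>
    refine ⟨Unit, inferInstance, inferInstance, by simp, ⟨Subsingleton.elim _ _, by simp⟩, ?_⟩
    simp [Omega]
  | succ r ih =>
    obtain ⟨A, _, _, hodd, hlen, hΩ⟩ := ih
    have hcard : Nat.card (WreathProduct A (ZMod 7) Frobenius21) = Nat.card A ^ 7 * 21 := by
      simp [Nat.card_fun]
    refine ⟨WreathProduct A (ZMod 7) Frobenius21, inferInstance, inferInstance, ?_, ?_, ?_⟩
    · rw [hcard]
      exact hodd.pow.mul (by decide)
    · exact WreathProduct.derivedLengthEq_add_two Frobenius21.derivedSeries_two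
        Frobenius21.translation_mem_derivedSeries_one (x₀ := 0)
        (by rw [Frobenius21.translation_smul]; decide)
        (by rw [Frobenius21.translation_smul, Frobenius21.translation_smul]; decide) hlen
    · have h21 : Omega 21 = 2 := by simp [Omega]
      rw [hcard, omega_pow_mul Nat.card_pos.ne' (by norm_num), h21, pow_succ, ← hΩ]
      ring

theorem exists_odd_solvable_derived_length_two_mul_general (r : ℕ) :
    ∃ (G : Type) (_ : Group G) (_ : Finite G), IsSolvable G ∧ Odd (Nat.card G) ∧
      DerivedLengthEq G (2 * r) ∧ Omega (Nat.card G) = (7 ^ r - 1) / 3 := by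
  obtain ⟨G, _, _, hodd, hlen, hΩ⟩ := exists_odd_derivedLengthEq_two_mul r
  refine ⟨G, inferInstance, inferInstance, (Group.isSolvable_def G).mpr ⟨_, hlen.1⟩, hodd, hlen, ?_⟩
  omega

/-- For every `r ≥ 1` there is a finite solvable group of odd order with derived length
exactly `2r` and composition length `(7^r − 1)/3` (e.g. the `r`-fold iterated wreath
product of the transitive subgroup `H₇ ≤ S₇` of order `21`). -/
theorem exists_odd_solvable_derived_length_two_mul (r : ℕ) (hr : 1 ≤ r) :
    ∃ (G : Type) (_ : Group G) (_ : Finite G), IsSolvable G ∧ Odd (Nat.card G) ∧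
      DerivedLengthEq G (2 * r) ∧ Omega (Nat.card G) = (7 ^ r - 1) / 3 :=
  exists_odd_solvable_derived_length_two_mul_general r
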